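/- arXiv:2204.00146 — 6 statements merged into one kernel-verified Lean document; each statement's English description precedes it below -/
import Mathlib

section
/- Let $E$ be a complex Banach lattice, $u \ge 0$ a quasi-interior point of $E$, and $A$ a closed linear operator on $E$ with domain contained in the principal ideal $E_u$. If $\lambda_0 \in \mathbb{C}$ lies in the resolvent set of $A$, then $(\lambda - \lambda_0) R(\lambda, A) \to 0$ in the operator norm of $\mathcal{L}(E, E_u)$ as $\lambda \to \lambda_0$, where $E_u$ carries the gauge norm $\|x\|_u = \inf\{c > 0 : |x| \le c u\}$. -/
/-!
Write `R₀ = R(λ₀, A)`. Since `R₀` maps `E` into `dom A ⊆ E_u`, the closed sets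
`{f | |R₀ f| ≤ n u}` cover `E`; by Baire one of them contains a ball, whence `|R₀ f| ≤ M ‖f‖ u`.
For `|λ - λ₀| ‖R₀‖ < 1` the Neumann series `V` of `(1 - (λ₀ - λ) R₀)⁻¹` converges and
`R(λ, A) = R₀ V`, so `|(λ - λ₀) R(λ, A) f| ≤ |λ - λ₀| M (1 - |λ - λ₀| ‖R₀‖)⁻¹ ‖f‖ u`,
and this coefficient tends to `0` as `λ → λ₀`.
-/

open Filter Topology

/-- Membership in the principal ideal `E_u` generated by `u`. -/
def InPrincipalIdeal {E : Type*} [NormedAddCommGroup E] [Lattice E] [HasSolidNorm E] [IsOrderedAddMonoid E] [NormedSpace ℝ E]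
    (u x : E) : Prop :=
  ∃ c : ℝ, 0 < c ∧ |x| ≤ c • u

/-- The gauge norm on the principal ideal `E_u`. -/
noncomputable def gaugeNorm {E : Type*} [NormedAddCommGroup E] [Lattice E] [HasSolidNorm E] [IsOrderedAddMonoid E] [NormedSpace ℝ E]
    (u x : E) : ℝ :=
  sInf {c : ℝ | 0 < c ∧ |x| ≤ c • u}

/-- `R` is the resolvent of the (unbounded) operator `A` at `lam`,
i.e. `R = (lam - A)⁻¹`. -/
def IsResolventAt {E : Type*} [NormedAddCommGroup E] [Lattice E] [HasSolidNorm E] [IsOrderedAddMonoid E] [NormedSpace ℝ E]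
    (A : E →ₗ.[ℝ] E) (lam : ℝ) (R : E →L[ℝ] E) : Prop :=
  (∀ x : A.domain, R (lam • (x : E) - A x) = x) ∧
  (∀ f : E, ∃ h : R f ∈ A.domain, lam • R f - A ⟨R f, h⟩ = f)

lemma nonneg_of_two_pow_nsmul_nonneg {G : Type*} [Lattice G] [AddCommGroup G]
    [IsOrderedAddMonoid G] {x : G} (k : ℕ) (h : 0 ≤ 2 ^ k • x) : 0 ≤ x := by
  induction k generalizing x with
  | zero => simpa using h
  | succ k ih =>
    rw [pow_succ', mul_nsmul] at h
    exact nsmul_two_semiclosed (ih h)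

section LatticeModule

variable {𝕜 M : Type*} [Field 𝕜] [LinearOrder 𝕜] [IsStrictOrderedRing 𝕜] [Lattice M]
  [AddCommGroup M] [Module 𝕜 M] [PosSMulMono 𝕜 M]

lemma abs_smul_of_pos {t : 𝕜} (ht : 0 < t) (x : M) : |t • x| = t • |x| := by
  rw [abs, abs, ← smul_neg]
  exact ((OrderIso.smulRight ht).map_sup x (-x)).symm

/-- `abs_smul` needs a linear order on `M`. -/
lemma abs_smul' [IsOrderedAddMonoid M] (t : 𝕜) (x : M) : |t • x| = |t| • |x| := by
  rcases lt_trichotomy t 0 with ht | rfl | ht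
  · rw [← neg_smul_neg, abs_smul_of_pos (neg_pos.2 ht), abs_neg, abs_of_neg ht]
  · simp
  · rw [abs_smul_of_pos ht, abs_of_pos ht]

end LatticeModule

section NormedLattice

variable {E : Type*} [NormedAddCommGroup E] [Lattice E] [HasSolidNorm E] [IsOrderedAddMonoid E]
  [NormedSpace ℝ E]

/-- The positive cone is closed and stable under halving, so it contains `t • x` for
`x ≥ 0` and every dyadic `t ≥ 0`, hence for every real `t ≥ 0`. -/
instance HasSolidNorm.isOrderedModule : IsOrderedModule ℝ E := by
  refine .of_smul_nonneg fun t ht x hx => ?_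
  set q : ℕ → ℝ := fun k => ⌊t * 2 ^ k⌋₊ / 2 ^ k
  have hq : Tendsto q atTop (𝓝 t) :=
    (tendsto_nat_floor_mul_div_atTop ht).comp (tendsto_pow_atTop_atTop_of_one_lt one_lt_two)
  have hqx (k : ℕ) : 0 ≤ q k • x := by
    refine nonneg_of_two_pow_nsmul_nonneg k ?_
    rw [← Nat.cast_smul_eq_nsmul ℝ, smul_smul, Nat.cast_pow, Nat.cast_ofNat,
      mul_div_cancel₀ _ (by positivity), Nat.cast_smul_eq_nsmul]
    exact nsmul_nonneg hx _
  exact isClosed_Ici.mem_of_tendsto (hq.smul_const x) (.of_forall hqx)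

lemma gaugeNorm_le_of_abs_le {u x : E} (hu : 0 ≤ u) {c : ℝ} (hc : 0 ≤ c) (h : |x| ≤ c • u) :
    gaugeNorm u x ≤ c :=
  le_of_forall_gt_imp_ge_of_dense fun _ hd =>
    csInf_le ⟨0, fun _ hc' => hc'.1.le⟩
      ⟨hc.trans_lt hd, h.trans (smul_le_smul_of_nonneg_right hd.le hu)⟩

section BoundedIntoPrincipalIdeal

variable {F : Type*} [NormedAddCommGroup F] [NormedSpace ℝ F]

lemma abs_le_smul_of_forall_norm_lt (T : F →L[ℝ] E) {u : E} {r K : ℝ} (hr : 0 < r)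
    (h : ∀ g, ‖g‖ < r → |T g| ≤ K • u) (f : F) : |T f| ≤ (2 * K / r * ‖f‖) • u := by
  rcases eq_or_ne f 0 with rfl | hf
  · simp
  have hf : 0 < ‖f‖ := norm_pos_iff.2 hf
  set s := r / (2 * ‖f‖)
  have hs : 0 < s := by positivity
  have hsf : ‖s • f‖ < r := by
    rw [norm_smul, Real.norm_of_nonneg hs.le, div_mul_eq_mul_div, div_lt_iff₀ (by positivity)]
    linarith [mul_pos hr hf]
  have hbound : s • |T f| ≤ K • u := by
    rw [← abs_smul_of_pos hs, ← map_smul]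
    exact h _ hsf
  calc |T f| = s⁻¹ • s • |T f| := (inv_smul_smul₀ hs.ne' _).symm
    _ ≤ s⁻¹ • K • u := smul_le_smul_of_nonneg_left hbound (inv_nonneg.2 hs.le)
    _ = (2 * K / r * ‖f‖) • u := by
      rw [smul_smul]
      congr 1
      simp only [s]
      field_simp

theorem exists_abs_le_smul_of_forall_inPrincipalIdeal [CompleteSpace F] {u : E} (hu : 0 ≤ u)
    (T : F →L[ℝ] E) (hT : ∀ f, InPrincipalIdeal u (T f)) :
    ∃ M, 0 ≤ M ∧ ∀ f, |T f| ≤ (M * ‖f‖) • u := by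
  set C : ℕ → Set F := fun n => {f | |T f| ≤ (n : ℝ) • u}
  have hC (n : ℕ) : IsClosed (C n) :=
    isClosed_le (T.continuous.sup T.continuous.neg) continuous_const
  have hcover : ⋃ n, C n = Set.univ := Set.eq_univ_of_forall fun f => by
    obtain ⟨c, -, hc⟩ := hT f
    exact Set.mem_iUnion.2 ⟨⌈c⌉₊, hc.trans (smul_le_smul_of_nonneg_right (Nat.le_ceil c) hu)⟩
  obtain ⟨n, f₀, hf₀⟩ := nonempty_interior_of_iUnion_of_closed hC hcover
  obtain ⟨r, hr, hball⟩ := Metric.isOpen_iff.1 isOpen_interior f₀ hf₀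
  have hsmall (g : F) (hg : ‖g‖ < r) : |T g| ≤ (2 * n : ℝ) • u := by
    have h₁ : f₀ + g ∈ C n :=
      interior_subset (hball (by rwa [Metric.mem_ball, dist_eq_norm, add_sub_cancel_left]))
    have h₂ : f₀ ∈ C n := interior_subset (hball (Metric.mem_ball_self hr))
    calc |T g| = |T (f₀ + g) + -T f₀| := by rw [map_add, add_neg_cancel_comm]
      _ ≤ |T (f₀ + g)| + |T f₀| := (abs_add_le _ _).trans_eq (by rw [abs_neg])
      _ ≤ (n : ℝ) • u + (n : ℝ) • u := add_le_add h₁ h₂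
      _ = (2 * n : ℝ) • u := by rw [← add_smul, two_mul]
  exact ⟨2 * (2 * n) / r, by positivity, abs_le_smul_of_forall_norm_lt T hr hsmall⟩

end BoundedIntoPrincipalIdeal

namespace IsResolventAt

variable {A : E →ₗ.[ℝ] E} {lam lam₀ : ℝ} {R S : E →L[ℝ] E}

lemma mem_domain (hR : IsResolventAt A lam R) (f : E) : R f ∈ A.domain := (hR.2 f).1

lemma unique (hR : IsResolventAt A lam R) (hS : IsResolventAt A lam S) : R = S := by
  ext f
  obtain ⟨hf, hSf⟩ := hS.2 f
  calc R f = R (lam • S f - A ⟨S f, hf⟩) := by rw [hSf]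
    _ = S f := hR.1 ⟨S f, hf⟩

lemma mul_of_inverse (hR : IsResolventAt A lam₀ R) {V : E →L[ℝ] E}
    (hVl : V * (1 - (lam₀ - lam) • R) = 1) (hVr : (1 - (lam₀ - lam) • R) * V = 1) :
    IsResolventAt A lam (R * V) := by
  refine ⟨fun x => ?_, fun f => ?_⟩
  · have hx : lam • (x : E) - A x = (1 - (lam₀ - lam) • R) (lam₀ • (x : E) - A x) := by
      rw [sub_apply, one_apply_eq_self, smul_apply, hR.1 x, sub_smul]
      abel
    rw [hx, mul_apply_eq_comp, ← mul_apply_eq_comp V, hVl, one_apply_eq_self, hR.1 x]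
  · obtain ⟨hg, hRg⟩ := hR.2 (V f)
    refine ⟨hg, ?_⟩
    calc lam • R (V f) - A ⟨R (V f), hg⟩
        = (lam₀ • R (V f) - A ⟨R (V f), hg⟩) - (lam₀ - lam) • R (V f) := by
          rw [sub_smul]; abel
      _ = (1 - (lam₀ - lam) • R) (V f) := by rw [hRg]; rfl
      _ = f := by rw [← mul_apply_eq_comp, hVr, one_apply_eq_self]

lemma exists_mul_of_abs_sub_mul_norm_lt [CompleteSpace E] (hR : IsResolventAt A lam₀ R)
    (h : |lam - lam₀| * ‖R‖ < 1) :
    ∃ V : E →L[ℝ] E, IsResolventAt A lam (R * V) ∧ ‖V‖ ≤ (1 - |lam - lam₀| * ‖R‖)⁻¹ := by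
  set t := (lam₀ - lam) • R
  have ht : ‖t‖ ≤ |lam - lam₀| * ‖R‖ := by
    simpa [abs_sub_comm] using norm_smul_le (lam₀ - lam) R
  have ht₁ : ‖t‖ < 1 := ht.trans_lt h
  refine ⟨∑' n, t ^ n, hR.mul_of_inverse (geom_series_mul_neg t ht₁) (mul_neg_geom_series t ht₁),
    ?_⟩
  calc ‖∑' n, t ^ n‖ ≤ ‖(1 : E →L[ℝ] E)‖ - 1 + (1 - ‖t‖)⁻¹ :=
        tsum_geometric_le_of_norm_lt_one t ht₁
    _ ≤ (1 - ‖t‖)⁻¹ := by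
      have : ‖(1 : E →L[ℝ] E)‖ ≤ 1 := ContinuousLinearMap.norm_id_le
      linarith
    _ ≤ (1 - |lam - lam₀| * ‖R‖)⁻¹ := by gcongr

end IsResolventAt

end NormedLattice

lemma eventually_abs_sub_mul_lt {lam₀ K M ε : ℝ} (hε : 0 < ε) :
    ∀ᶠ lam in 𝓝 lam₀, |lam - lam₀| * K < 1 ∧ |lam - lam₀| * M * (1 - |lam - lam₀| * K)⁻¹ < ε := by
  have hδ : Tendsto (fun lam => |lam - lam₀|) (𝓝 lam₀) (𝓝 0) := by
    simpa using ((continuous_sub_right lam₀).abs.tendsto lam₀)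
  have h₁ : Tendsto (fun lam => |lam - lam₀| * K) (𝓝 lam₀) (𝓝 0) := by
    simpa using hδ.mul_const K
  have h₂ : Tendsto (fun lam => |lam - lam₀| * M * (1 - |lam - lam₀| * K)⁻¹) (𝓝 lam₀) (𝓝 0) := by
    simpa using (hδ.mul_const M).mul ((tendsto_const_nhds.sub h₁).inv₀ (by simp))
  exact (h₁.eventually (gt_mem_nhds one_pos)).and (h₂.eventually (gt_mem_nhds hε))

theorem stmt0_general {E : Type*} [NormedAddCommGroup E] [Lattice E] [HasSolidNorm E] [IsOrderedAddMonoid E] [NormedSpace ℝ E] [CompleteSpace E]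
    (u : E) (hu : 0 ≤ u)
    (A : E →ₗ.[ℝ] E)
    (hdom : ∀ x ∈ A.domain, InPrincipalIdeal u x)
    (ρ : Set ℝ) (R : ℝ → E →L[ℝ] E)
    (hR : ∀ lam ∈ ρ, IsResolventAt A lam (R lam))
    (hρmax : ∀ lam : ℝ, (∃ S : E →L[ℝ] E, IsResolventAt A lam S) → lam ∈ ρ)
    (lam0 : ℝ) (h0 : lam0 ∈ ρ) :
    ∀ ε > 0, ∀ᶠ lam in 𝓝 lam0, lam ∈ ρ ∧
      ∀ f : E, gaugeNorm u ((lam - lam0) • R lam f) ≤ ε * ‖f‖ := by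
  intro ε hε
  obtain ⟨M, hM, hRu⟩ := exists_abs_le_smul_of_forall_inPrincipalIdeal hu (R lam0)
    fun f => hdom _ ((hR lam0 h0).mem_domain f)
  filter_upwards [eventually_abs_sub_mul_lt (K := ‖R lam0‖) (M := M) hε] with lam ⟨hsmall, hcoef⟩
  obtain ⟨V, hS, hV⟩ := (hR lam0 h0).exists_mul_of_abs_sub_mul_norm_lt hsmall
  have hlam : lam ∈ ρ := hρmax lam ⟨_, hS⟩
  refine ⟨hlam, fun f => gaugeNorm_le_of_abs_le hu (by positivity) ?_⟩
  have hVf : ‖V f‖ ≤ (1 - |lam - lam0| * ‖R lam0‖)⁻¹ * ‖f‖ := V.le_of_opNorm_le hV f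
  calc |(lam - lam0) • R lam f| = |lam - lam0| • |R lam0 (V f)| := by
        rw [(hR lam hlam).unique hS, abs_smul', mul_apply_eq_comp]
    _ ≤ |lam - lam0| • (M * ‖V f‖) • u := smul_le_smul_of_nonneg_left (hRu _) (abs_nonneg _)
    _ ≤ (ε * ‖f‖) • u := by
        rw [smul_smul]
        refine smul_le_smul_of_nonneg_right ?_ hu
        calc |lam - lam0| * (M * ‖V f‖)
            ≤ |lam - lam0| * (M * ((1 - |lam - lam0| * ‖R lam0‖)⁻¹ * ‖f‖)) := by gcongr
          _ = |lam - lam0| * M * (1 - |lam - lam0| * ‖R lam0‖)⁻¹ * ‖f‖ := by ring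
          _ ≤ ε * ‖f‖ := by gcongr

/-- Lemma 2.3(i): if `dom A ⊆ E_u` and `lam0 ∈ ρ(A)`, then
`(lam - lam0) R(lam, A) → 0` in the operator norm of `L(E, E_u)` as `lam → lam0`. -/
theorem stmt0 {E : Type*} [NormedAddCommGroup E] [Lattice E] [HasSolidNorm E] [IsOrderedAddMonoid E] [NormedSpace ℝ E] [CompleteSpace E]
    (u : E) (hu : 0 ≤ u) (huq : Dense {x : E | InPrincipalIdeal u x})
    (A : E →ₗ.[ℝ] E) (hclosed : IsClosed (A.graph : Set (E × E)))
    (hdom : ∀ x ∈ A.domain, InPrincipalIdeal u x)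
    (ρ : Set ℝ) (R : ℝ → E →L[ℝ] E)
    (hR : ∀ lam ∈ ρ, IsResolventAt A lam (R lam))
    (hρmax : ∀ lam : ℝ, (∃ S : E →L[ℝ] E, IsResolventAt A lam S) → lam ∈ ρ)
    (lam0 : ℝ) (h0 : lam0 ∈ ρ) :
    ∀ ε > 0, ∀ᶠ lam in 𝓝 lam0, lam ∈ ρ ∧
      ∀ f : E, gaugeNorm u ((lam - lam0) • R lam f) ≤ ε * ‖f‖ :=
  stmt0_general u hu A hdom ρ R hR hρmax lam0 h0
end

section
/- Let $E$ be a complex Banach lattice, $u \ge 0$ a quasi-interior point, and $A$ a closed linear operator on $E$ with $\mathrm{dom}(A) \subseteq E_u$. If $\lambda_0$ is a simple pole of the resolvent $R(\cdot, A)$ with associated spectral projection $P$, then $(\lambda - \lambda_0) R(\lambda, A) \to P$ in the operator norm of $\mathcal{L}(E, E_u)$ as $\lambda \to \lambda_0$. -/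
open Filter Topology

/-!
Fix `μ` in the resolvent set. Since `R(μ)` maps `E` into `dom A ⊆ E_u`, the closed sets
`{g | |R(μ) g| ≤ (n + 1) u}` cover `E`, and Baire's theorem makes `R(μ)` bounded from `E` into
`E_u`. Letting `λ → λ₀` in the resolvent identity gives `(μ - λ₀) R(μ) P = P`, and then the
identity factors `(λ - λ₀) R(λ) - P = R(μ) T(λ)` with `T(λ) → 0` in `L(E)`.
-/

section LatticeOrderedGroup

variable {α : Type*} [Lattice α] [AddCommGroup α]

lemma nonneg_of_two_pow_nsmul_nonneg_s1 [IsOrderedAddMonoid α] {a : α} :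
    ∀ {k : ℕ}, 0 ≤ 2 ^ k • a → 0 ≤ a
  | 0, h => by simpa using h
  | k + 1, h => nsmul_two_semiclosed <| nonneg_of_two_pow_nsmul_nonneg_s1 (k := k) <| by
      rwa [pow_succ', mul_nsmul] at h

lemma abs_smul_le_smul_abs {R : Type*} [Semiring R] [PartialOrder R] [Module R α]
    [PosSMulMono R α] {c : R} (hc : 0 ≤ c) (x : α) : |c • x| ≤ c • |x| :=
  abs_le'.2 ⟨smul_le_smul_of_nonneg_left (le_abs_self x) hc,
    smul_neg c x ▸ smul_le_smul_of_nonneg_left (neg_le_abs x) hc⟩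

end LatticeOrderedGroup

section NormedLattice

variable {E : Type*} [NormedAddCommGroup E] [Lattice E] [HasSolidNorm E] [IsOrderedAddMonoid E]
  [NormedSpace ℝ E]

/-- Dyadic approximation: `2 ^ n • ((⌊c 2ⁿ⌋₊ / 2ⁿ) • v)` is a natural multiple of `v`, and the
positive cone is closed. -/
theorem HasSolidNorm.smul_nonneg {c : ℝ} (hc : 0 ≤ c) {v : E} (hv : 0 ≤ v) : 0 ≤ c • v := by
  have hdyadic (n : ℕ) : 0 ≤ ((⌊c * 2 ^ n⌋₊ : ℝ) / 2 ^ n) • v := by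
    refine nonneg_of_two_pow_nsmul_nonneg_s1 (k := n) ?_
    rw [← Nat.cast_smul_eq_nsmul ℝ, smul_smul, Nat.cast_pow, Nat.cast_ofNat,
      mul_div_cancel₀ _ (by positivity), Nat.cast_smul_eq_nsmul]
    exact nsmul_nonneg hv _
  have hlim : Tendsto (fun n : ℕ => (⌊c * 2 ^ n⌋₊ : ℝ) / 2 ^ n) atTop (𝓝 c) :=
    (tendsto_nat_floor_mul_div_atTop hc).comp (tendsto_pow_atTop_atTop_of_one_lt one_lt_two)
  exact ge_of_tendsto' (hlim.smul_const v) hdyadic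

instance HasSolidNorm.posSMulMono : PosSMulMono ℝ E :=
  PosSMulMono.of_smul_nonneg fun _ ha _ hb => HasSolidNorm.smul_nonneg ha hb

instance HasSolidNorm.smulPosMono : SMulPosMono ℝ E :=
  ⟨fun _ hb _ _ hab => sub_nonneg.1 <| by
    simpa only [sub_smul] using HasSolidNorm.smul_nonneg (sub_nonneg.2 hab) hb⟩

lemma gaugeNorm_le {u x : E} (hu : 0 ≤ u) {c : ℝ} (hc : 0 ≤ c) (hx : |x| ≤ c • u) :
    gaugeNorm u x ≤ c :=
  le_of_forall_pos_le_add fun _ hδ => csInf_le ⟨0, fun _ h => h.1.le⟩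
    ⟨by positivity, hx.trans (smul_le_smul_of_nonneg_right (by linarith) hu)⟩

lemma exists_abs_le_smul_of_norm_lt [CompleteSpace E] {u : E} (hu : 0 ≤ u) (T : E →L[ℝ] E)
    (hT : ∀ f, InPrincipalIdeal u (T f)) :
    ∃ M : ℝ, 0 < M ∧ ∃ r > 0, ∀ h : E, ‖h‖ < r → |T h| ≤ M • u := by
  let C : ℕ → Set E := fun n => {g | |T g| ≤ ((n : ℝ) + 1) • u}
  have hC_closed (n : ℕ) : IsClosed (C n) :=
    isClosed_le (T.continuous.sup T.continuous.neg) continuous_const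
  have hC_cover : ⋃ n, C n = Set.univ := by
    refine Set.eq_univ_of_forall fun g => Set.mem_iUnion.2 ?_
    obtain ⟨c, -, hc⟩ := hT g
    obtain ⟨n, hn⟩ := exists_nat_ge c
    exact ⟨n, hc.trans <| smul_le_smul_of_nonneg_right (hn.trans (le_add_of_nonneg_right
      zero_le_one)) hu⟩
  obtain ⟨n, x₀, hx₀⟩ := nonempty_interior_of_iUnion_of_closed hC_closed hC_cover
  obtain ⟨r, hr, hball⟩ := Metric.mem_nhds_iff.1 (mem_interior_iff_mem_nhds.1 hx₀)
  refine ⟨2 * ((n : ℝ) + 1), by positivity, r, hr, fun h hh => ?_⟩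
  have hx₀h : x₀ + h ∈ C n := hball (by simpa [dist_eq_norm] using hh)
  have hx₀ : x₀ ∈ C n := hball (Metric.mem_ball_self hr)
  calc |T h| = |T (x₀ + h) + -T x₀| := by rw [map_add]; abel_nf
    _ ≤ |T (x₀ + h)| + |T x₀| := (abs_add_le _ _).trans_eq (by rw [abs_neg])
    _ ≤ ((n : ℝ) + 1) • u + ((n : ℝ) + 1) • u := add_le_add hx₀h hx₀
    _ = (2 * ((n : ℝ) + 1)) • u := by rw [← add_smul, two_mul]

lemma abs_le_mul_norm_smul_of_norm_lt {u : E} {T : E →L[ℝ] E} {M r : ℝ}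
    (hM : 0 < M) (hr : 0 < r) (hT : ∀ h : E, ‖h‖ < r → |T h| ≤ M • u) (g : E) :
    |T g| ≤ (2 * M / r * ‖g‖) • u := by
  rcases eq_or_ne g 0 with rfl | hg
  · simp
  have hg : 0 < ‖g‖ := norm_pos_iff.2 hg
  set t := r / (2 * ‖g‖) with ht
  have ht_pos : 0 < t := by positivity
  have htg : ‖t • g‖ < r := by
    rw [norm_smul, Real.norm_of_nonneg ht_pos.le, ht, div_mul_eq_mul_div,
      div_lt_iff₀ (by positivity)]
    nlinarith
  calc |T g| = |t⁻¹ • T (t • g)| := by rw [map_smul, inv_smul_smul₀ ht_pos.ne']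
    _ ≤ t⁻¹ • |T (t • g)| := abs_smul_le_smul_abs (by positivity) _
    _ ≤ t⁻¹ • M • u := smul_le_smul_of_nonneg_left (hT _ htg) (by positivity)
    _ = (2 * M / r * ‖g‖) • u := by rw [smul_smul, ht]; congr 1; field_simp

lemma exists_abs_le_mul_norm_smul [CompleteSpace E] {u : E} (hu : 0 ≤ u) (T : E →L[ℝ] E)
    (hT : ∀ f, InPrincipalIdeal u (T f)) :
    ∃ K > 0, ∀ f, |T f| ≤ (K * ‖f‖) • u := by
  obtain ⟨M, hM, r, hr, hball⟩ := exists_abs_le_smul_of_norm_lt hu T hT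
  exact ⟨2 * M / r, by positivity, abs_le_mul_norm_smul_of_norm_lt hM hr hball⟩

lemma eventually_gaugeNorm_comp_le {ι : Type*} {l : Filter ι} {u : E} (hu : 0 ≤ u)
    {S : E →L[ℝ] E} {K : ℝ} (hK : 0 < K) (hS : ∀ f, |S f| ≤ (K * ‖f‖) • u)
    {T : ι → E →L[ℝ] E} (hT : Tendsto T l (𝓝 0)) {ε : ℝ} (hε : 0 < ε) :
    ∀ᶠ i in l, ∀ f, gaugeNorm u (S (T i f)) ≤ ε * ‖f‖ := by
  filter_upwards [NormedAddGroup.tendsto_nhds_zero.1 hT (ε / K) (by positivity)] with i hi f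
  refine gaugeNorm_le hu (by positivity) ((hS _).trans (smul_le_smul_of_nonneg_right ?_ hu))
  calc K * ‖T i f‖ ≤ K * (ε / K * ‖f‖) := by
        gcongr; exact (T i).le_opNorm f |>.trans (by gcongr)
    _ = ε * ‖f‖ := by field_simp

end NormedLattice

section Resolvent

variable {E : Type*} [NormedAddCommGroup E] [Lattice E] [HasSolidNorm E] [IsOrderedAddMonoid E]
  [NormedSpace ℝ E] {A : E →ₗ.[ℝ] E}

open ContinuousLinearMap

lemma IsResolventAt.eq_add_smul_comp {lam μ : ℝ} {Rlam Rμ : E →L[ℝ] E}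
    (hlam : IsResolventAt A lam Rlam) (hμ : IsResolventAt A μ Rμ) :
    Rlam = Rμ + (μ - lam) • Rμ.comp Rlam := by
  ext f
  obtain ⟨hmem, hA⟩ := hlam.2 f
  have h := hμ.1 ⟨Rlam f, hmem⟩
  rw [eq_sub_of_add_eq' (sub_eq_iff_eq_add.1 hA).symm,
    show μ • Rlam f - (lam • Rlam f - f) = (μ - lam) • Rlam f + f by rw [sub_smul]; abel,
    map_add, map_smul] at h
  exact h.symm.trans (add_comm _ _)

variable {ρ : Set ℝ} {R : ℝ → E →L[ℝ] E} {lam0 μ : ℝ}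

lemma smul_resolvent_eq_of_mem (hR : ∀ lam ∈ ρ, IsResolventAt A lam (R lam)) (hμ : μ ∈ ρ)
    {lam : ℝ} (hlam : lam ∈ ρ) :
    (lam - lam0) • R lam = (lam - lam0) • R μ + (μ - lam) • (R μ).comp ((lam - lam0) • R lam) := by
  conv_lhs => rw [(hR lam hlam).eq_add_smul_comp (hR μ hμ)]
  rw [smul_add, comp_smul, smul_comm]

lemma smul_comp_residue_eq (hR : ∀ lam ∈ ρ, IsResolventAt A lam (R lam))
    (hiso : ∀ᶠ lam in 𝓝[≠] lam0, lam ∈ ρ) {P : E →L[ℝ] E}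
    (hsimple : Tendsto (fun lam => (lam - lam0) • R lam) (𝓝[≠] lam0) (𝓝 P)) (hμ : μ ∈ ρ) :
    (μ - lam0) • (R μ).comp P = P := by
  have hlim : Tendsto
      (fun lam => (lam - lam0) • R μ + (μ - lam) • (R μ).comp ((lam - lam0) • R lam)) (𝓝[≠] lam0)
      (𝓝 ((lam0 - lam0) • R μ + (μ - lam0) • (R μ).comp P)) := by
    refine (((tendsto_id.sub_const lam0).smul_const _).mono_left nhdsWithin_le_nhds).add
      (((tendsto_const_nhds.sub tendsto_id).mono_left nhdsWithin_le_nhds).smul ?_)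
    exact ((compL ℝ E E E (R μ)).continuous.tendsto P).comp hsimple
  have heq : ∀ᶠ lam in 𝓝[≠] lam0, (lam - lam0) • R lam =
      (lam - lam0) • R μ + (μ - lam) • (R μ).comp ((lam - lam0) • R lam) := by
    filter_upwards [hiso] with lam hlam using smul_resolvent_eq_of_mem hR hμ hlam
  simpa using (tendsto_nhds_unique (hsimple.congr' heq) hlim).symm

lemma exists_tendsto_zero_smul_resolvent_sub_eq_comp
    (hR : ∀ lam ∈ ρ, IsResolventAt A lam (R lam))
    (hiso : ∀ᶠ lam in 𝓝[≠] lam0, lam ∈ ρ) {P : E →L[ℝ] E}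
    (hsimple : Tendsto (fun lam => (lam - lam0) • R lam) (𝓝[≠] lam0) (𝓝 P)) (hμ : μ ∈ ρ) :
    ∃ T : ℝ → E →L[ℝ] E, Tendsto T (𝓝[≠] lam0) (𝓝 0) ∧
      ∀ᶠ lam in 𝓝[≠] lam0, (lam - lam0) • R lam - P = (R μ).comp (T lam) := by
  refine ⟨fun lam => (lam - lam0) • ContinuousLinearMap.id ℝ E
    + (μ - lam) • ((lam - lam0) • R lam) - (μ - lam0) • P, ?_, ?_⟩
  · have h := ((((tendsto_id.sub_const lam0).smul_const (ContinuousLinearMap.id ℝ E)).mono_left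
      nhdsWithin_le_nhds).add ((((tendsto_const_nhds (x := μ)).sub tendsto_id).mono_left
      nhdsWithin_le_nhds).smul hsimple)).sub_const ((μ - lam0) • P)
    simpa using h
  · filter_upwards [hiso] with lam hlam
    rw [comp_sub, comp_add, comp_smul, comp_id, comp_smul (R μ) (μ - lam),
      comp_smul (R μ) (μ - lam0), smul_comp_residue_eq hR hiso hsimple hμ, ← smul_resolvent_eq_of_mem hR hμ hlam]

end Resolvent

theorem stmt1_general {E : Type*} [NormedAddCommGroup E] [Lattice E] [HasSolidNorm E] [IsOrderedAddMonoid E] [NormedSpace ℝ E] [CompleteSpace E]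
    (u : E) (hu : 0 ≤ u)
    (A : E →ₗ.[ℝ] E)
    (hdom : ∀ x ∈ A.domain, InPrincipalIdeal u x)
    (ρ : Set ℝ) (R : ℝ → E →L[ℝ] E)
    (hR : ∀ lam ∈ ρ, IsResolventAt A lam (R lam))
    (lam0 : ℝ)
    -- `lam0` is an isolated point of the spectrum:
    (hiso : ∀ᶠ lam in 𝓝[≠] lam0, lam ∈ ρ)
    -- `lam0` is a simple pole of the resolvent with residue (spectral projection) `P`:
    (P : E →L[ℝ] E)
    (hsimple : Tendsto (fun lam => (lam - lam0) • R lam) (𝓝[≠] lam0) (𝓝 P)) :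
    ∀ ε > 0, ∀ᶠ lam in 𝓝[≠] lam0,
      ∀ f : E, gaugeNorm u ((lam - lam0) • R lam f - P f) ≤ ε * ‖f‖ := by
  obtain ⟨μ, hμ⟩ := hiso.exists
  obtain ⟨K, hK, hbound⟩ :=
    exists_abs_le_mul_norm_smul hu (R μ) fun f => hdom _ ((hR μ hμ).2 f).fst
  obtain ⟨T, hT, hfactor⟩ := exists_tendsto_zero_smul_resolvent_sub_eq_comp hR hiso hsimple hμ
  intro ε hε
  filter_upwards [hfactor, eventually_gaugeNorm_comp_le hu hK hbound hT hε] with lam hlam hsmall f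
  rw [show (lam - lam0) • R lam f - P f = ((lam - lam0) • R lam - P) f from rfl, hlam]
  exact hsmall f

/-- Lemma 2.3(ii): if `dom A ⊆ E_u` and `lam0` is a simple pole of the resolvent with
spectral projection (residue) `P`, then `(lam - lam0) R(lam, A) → P` in the operator
norm of `L(E, E_u)` as `lam → lam0`. -/
theorem stmt1 {E : Type*} [NormedAddCommGroup E] [Lattice E] [HasSolidNorm E] [IsOrderedAddMonoid E] [NormedSpace ℝ E] [CompleteSpace E]
    (u : E) (hu : 0 ≤ u) (huq : Dense {x : E | InPrincipalIdeal u x})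
    (A : E →ₗ.[ℝ] E) (hclosed : IsClosed (A.graph : Set (E × E)))
    (hdom : ∀ x ∈ A.domain, InPrincipalIdeal u x)
    (ρ : Set ℝ) (R : ℝ → E →L[ℝ] E)
    (hR : ∀ lam ∈ ρ, IsResolventAt A lam (R lam))
    (lam0 : ℝ)
    -- `lam0` is an isolated point of the spectrum:
    (hiso : ∀ᶠ lam in 𝓝[≠] lam0, lam ∈ ρ) (hspec : lam0 ∉ ρ)
    -- `lam0` is a simple pole of the resolvent with residue (spectral projection) `P`:
    (P : E →L[ℝ] E) (hPproj : P.comp P = P) (hPne : P ≠ 0)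
    (hsimple : Tendsto (fun lam => (lam - lam0) • R lam) (𝓝[≠] lam0) (𝓝 P)) :
    ∀ ε > 0, ∀ᶠ lam in 𝓝[≠] lam0,
      ∀ f : E, gaugeNorm u ((lam - lam0) • R lam f - P f) ≤ ε * ‖f‖ :=
  stmt1_general u hu A hdom ρ R hR lam0 hiso P hsimple
end

section
/- Let $E$ be a complex Banach lattice and $P, Q \in \mathcal{L}(E)$ be projections with $0 \le Q \le P$ and $Q \ne 0$. If $P$ has rank one, then $Q$ has rank one. -/
/-!
Write `P f = φ(f) u` with `u = P f₀ > 0`, where `Q f₀ ≠ 0`. For `f ≥ 0`,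
`Q f = Q (Q f) ≤ Q (P f) = φ(f) Q u`; for a positive fixed point `z` of `Q` this squeezes `z`
onto the line through `Q u`. Since `Q f = Q f⁺ - Q f⁻` and `Q f⁺, Q f⁻` are positive fixed
points, the range of `Q` is that line.
-/

open Filter Topology Module

section LatticeOrderedGroup

variable {E : Type*} [AddCommGroup E] [Lattice E] [IsOrderedAddMonoid E]

lemma apply_mem_of_forall_nonneg {F G S : Type*} [AddGroup F] [FunLike G E F]
    [AddMonoidHomClass G E F] [SetLike S F] [AddSubgroupClass S F] {T : G} {s : S}
    (h : ∀ f, 0 ≤ f → T f ∈ s) (f : E) : T f ∈ s := by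
  rw [← posPart_sub_negPart f, map_sub]
  exact sub_mem (h _ (posPart_nonneg f)) (h _ (negPart_nonneg f))

lemma div_two_pow_smul_nonneg [Module ℝ E] {u : E} (hu : 0 ≤ u) (k n : ℕ) :
    0 ≤ ((k : ℝ) / 2 ^ n) • u := by
  induction n with
  | zero => simpa [Nat.cast_smul_eq_nsmul] using nsmul_nonneg hu k
  | succ n ih =>
    refine nsmul_two_semiclosed ?_
    rw [two_nsmul, ← add_smul]
    convert ih using 2
    ring

/-- Compatibility of the order with real scalars is not assumed on `E`: it holds for dyadic
scalars because `0 ≤ 2 • x → 0 ≤ x` in a lattice-ordered group, and then for all scalars because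
the positive cone is closed. -/
lemma isOrderedModule_of_orderClosedTopology [Module ℝ E] [TopologicalSpace E]
    [ContinuousSMul ℝ E] [OrderClosedTopology E] : IsOrderedModule ℝ E := by
  refine IsOrderedModule.of_smul_nonneg fun c hc u hu => ?_
  have hclosed : IsClosed {t : ℝ | 0 ≤ t • u} :=
    isClosed_Ici.preimage (continuous_id.smul continuous_const)
  have hdyadic : Tendsto (fun n : ℕ => (⌊c * 2 ^ n⌋₊ : ℝ) / 2 ^ n) atTop (𝓝 c) :=
    (tendsto_nat_floor_mul_div_atTop hc).comp (tendsto_pow_atTop_atTop_of_one_lt one_lt_two)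
  exact hclosed.mem_of_tendsto hdyadic (.of_forall fun n => div_two_pow_smul_nonneg hu _ n)

end LatticeOrderedGroup

lemma exists_smul_eq_of_finrank_range_eq_one {K V W : Type*} [Field K] [AddCommGroup V]
    [Module K V] [AddCommGroup W] [Module K W] {T : V →ₗ[K] W}
    (hT : finrank K (LinearMap.range T) = 1) {u : W} (hu : u ∈ LinearMap.range T) (hu0 : u ≠ 0)
    (f : V) : ∃ c : K, T f = c • u := by
  obtain ⟨c, hc⟩ :=
    (finrank_eq_one_iff_of_nonzero' ⟨u, hu⟩ (by simpa using hu0)).1 hT ⟨T f, f, rfl⟩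
  exact ⟨c, (congrArg Subtype.val hc).symm⟩

namespace PositiveLinearMap

section OrderedModule

variable {R E : Type*} [Semiring R] [AddCommMonoid E] [PartialOrder E] [Module R E]
  {P Q : E →ₚ[R] E}

lemma apply_le_apply_apply (hQQ : ∀ f, Q (Q f) = Q f) (hQP : ∀ f, 0 ≤ f → Q f ≤ P f) {f : E}
    (hf : 0 ≤ f) : Q f ≤ Q (P f) :=
  hQQ f ▸ OrderHomClass.mono Q (hQP f hf)

end OrderedModule

variable {𝕜 E : Type*} [Field 𝕜] [LinearOrder 𝕜] [IsStrictOrderedRing 𝕜]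
  [AddCommGroup E] [Lattice E] [IsOrderedAddMonoid E] [Module 𝕜 E] [IsOrderedModule 𝕜 E]
  {P Q : E →ₚ[𝕜] E} {u : E}

/-- The gap `w = φ(z) Q u - z` is a positive fixed point of `Q` with
`P w = φ(z) (φ(Q u) - 1) u ≤ 0`, so `w = Q w ≤ P w ≤ 0`. -/
lemma mem_span_singleton_apply_of_apply_eq_self (hQQ : ∀ f, Q (Q f) = Q f)
    (hQP : ∀ f, 0 ≤ f → Q f ≤ P f) (hu : 0 < u) (hPu : P u = u)
    (hP : ∀ f, ∃ c : 𝕜, P f = c • u) {z : E} (hz : 0 ≤ z) (hQz : Q z = z) :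
    z ∈ 𝕜 ∙ Q u := by
  have : SMulPosStrictMono 𝕜 E := SMulPosMono.toSMulPosStrictMono
  obtain ⟨c, hc⟩ := hP z
  obtain ⟨d, hd⟩ := hP (Q u)
  have hc0 : 0 ≤ c := nonneg_of_smul_nonneg_of_pos_right (hc ▸ map_nonneg P hz) hu
  have hd1 : d ≤ 1 := by
    rw [← smul_le_iff_le_one_left hu, ← hd]
    simpa [hPu] using OrderHomClass.mono P (hQP u hu.le)
  set w := c • Q u - z
  have hw : 0 ≤ w := by
    simpa [w, hQz, hc] using apply_le_apply_apply hQQ hQP hz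
  have hw0 : w ≤ 0 := calc
    w = Q w := by simp [w, hQQ, hQz]
    _ ≤ P w := hQP w hw
    _ = (c * (d - 1)) • u := by
      simp only [w, map_sub, map_smul, hc, hd, smul_smul, mul_sub, sub_smul, mul_one]
    _ ≤ 0 := smul_nonpos_of_nonpos_of_nonneg
      (mul_nonpos_of_nonneg_of_nonpos hc0 (sub_nonpos.2 hd1)) hu.le
  exact Submodule.mem_span_singleton.2 ⟨c, sub_eq_zero.1 (le_antisymm hw0 hw)⟩

lemma range_eq_span_singleton_apply (hQQ : ∀ f, Q (Q f) = Q f)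
    (hQP : ∀ f, 0 ≤ f → Q f ≤ P f) (hu : 0 < u) (hPu : P u = u)
    (hP : ∀ f, ∃ c : 𝕜, P f = c • u) :
    LinearMap.range Q.toLinearMap = 𝕜 ∙ Q u := by
  refine le_antisymm ?_ ((Submodule.span_singleton_le_iff_mem _ _).2 ⟨u, rfl⟩)
  rintro _ ⟨f, rfl⟩
  exact apply_mem_of_forall_nonneg (T := Q) (fun g hg =>
    mem_span_singleton_apply_of_apply_eq_self hQQ hQP hu hPu hP (map_nonneg Q hg) (hQQ g)) f

end PositiveLinearMap

open PositiveLinearMap in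
theorem stmt6_general {E : Type*} [NormedAddCommGroup E] [Lattice E] [HasSolidNorm E] [IsOrderedAddMonoid E] [NormedSpace ℝ E]
    (P Q : E →L[ℝ] E)
    (hPproj : P.comp P = P) (hQproj : Q.comp Q = Q)
    (hQpos : ∀ f : E, 0 ≤ f → 0 ≤ Q f)
    (hQleP : ∀ f : E, 0 ≤ f → Q f ≤ P f)
    (hQne : Q ≠ 0)
    (hrankP : Module.finrank ℝ (LinearMap.range (P : E →ₗ[ℝ] E)) = 1) :
    Module.finrank ℝ (LinearMap.range (Q : E →ₗ[ℝ] E)) = 1 := by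
  have : IsOrderedModule ℝ E := isOrderedModule_of_orderClosedTopology
  have hPpos (f : E) (hf : 0 ≤ f) : 0 ≤ P f := (hQpos f hf).trans (hQleP f hf)
  have hQQ (f : E) : Q (Q f) = Q f := congrArg (· f) hQproj
  obtain ⟨f₀, hf₀, hQf₀⟩ : ∃ f, 0 ≤ f ∧ Q f ≠ 0 := by
    by_contra! h
    refine hQne (ContinuousLinearMap.ext fun f => ?_)
    simpa using apply_mem_of_forall_nonneg (T := (Q : E →ₗ[ℝ] E)) (s := (⊥ : Submodule ℝ E))
      (by simpa using h) f
  set u := P f₀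
  have hu : 0 < u := (hPpos f₀ hf₀).lt_of_ne fun h =>
    hQf₀ (le_antisymm (h ▸ hQleP f₀ hf₀) (hQpos f₀ hf₀))
  let P' : E →ₚ[ℝ] E := mk₀ P hPpos
  let Q' : E →ₚ[ℝ] E := mk₀ Q hQpos
  have hQu : Q u ≠ 0 := fun h => hQf₀ (le_antisymm
    (h ▸ apply_le_apply_apply (P := P') (Q := Q') hQQ hQleP hf₀) (hQpos f₀ hf₀))
  have hrange : LinearMap.range (Q : E →ₗ[ℝ] E) = ℝ ∙ Q u :=
    range_eq_span_singleton_apply (P := P') (Q := Q') hQQ hQleP hu (congrArg (· f₀) hPproj)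
      (exists_smul_eq_of_finrank_range_eq_one hrankP ⟨f₀, rfl⟩ hu.ne')
  rw [hrange, finrank_span_singleton hQu]

/-- If `P, Q` are bounded projections on a Banach lattice with `0 ≤ Q ≤ P` (in the sense
of positive operators), `Q ≠ 0`, and `P` has rank one, then `Q` has rank one. -/
theorem stmt6 {E : Type*} [NormedAddCommGroup E] [Lattice E] [HasSolidNorm E] [IsOrderedAddMonoid E] [NormedSpace ℝ E] [CompleteSpace E]
    (P Q : E →L[ℝ] E)
    (hPproj : P.comp P = P) (hQproj : Q.comp Q = Q)
    (hQpos : ∀ f : E, 0 ≤ f → 0 ≤ Q f)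
    (hQleP : ∀ f : E, 0 ≤ f → Q f ≤ P f)
    (hQne : Q ≠ 0)
    (hrankP : Module.finrank ℝ (LinearMap.range (P : E →ₗ[ℝ] E)) = 1) :
    Module.finrank ℝ (LinearMap.range (Q : E →ₗ[ℝ] E)) = 1 :=
  stmt6_general P Q hPproj hQproj hQpos hQleP hQne hrankP
end

section
/- Let $(e^{tA})_{t \ge 0}$ and $(e^{tB})_{t \ge 0}$ be real $C_0$-semigroups on a complex Banach lattice $E$, let $u \ge 0$ be a quasi-interior point, and let $\varphi \in E'$ be a strictly positive functional. Assume: (a) there exist $t_1, t_2 \ge 0$ with $e^{t_1 A} E \subseteq E_u$ and $e^{t_2 A'} E' \subseteq (E')_{\varphi}$; (b) there exist $t_3 \ge 0$ and $c > 0$ with $e^{tB} \ge c (u \otimes \varphi)$ for all $t \ge t_3$; (c) $\|e^{tA}\| \to 0$ as $t \to \infty$. Then there exist $\tau \ge 0$ and $c' > 0$ such that $e^{tB}|f| - |e^{tA} f| \ge c' (u \otimes \varphi)|f|$ for all $t \ge \tau$ and all $f \in E$. In particular, $(e^{tB})$ uniformly eventually dominates $(e^{tA})$. -/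
open Filter Topology

/-!
Write `t = t₁ + s + t₂`. By Baire category arguments the smoothing hypotheses become uniform:
`|e^{t₁A} f| ≤ C₁ ‖f‖ u` and `‖e^{t₂A} g‖ ≤ C₂ φ |g|`. Hence
`|e^{tA} f| ≤ C₁ C₂ ‖e^{sA}‖ φ |f| • u`, and since `‖e^{sA}‖ → 0` this is eventually at most half
of the lower bound `c φ |f| • u` for `e^{tB} |f|`; the other half is the domination gap.
-/

universe v

lemma nonneg_of_two_pow_nsmul_nonneg_s8 {α : Type*} [AddCommGroup α] [Lattice α]
    [IsOrderedAddMonoid α] {x : α} : ∀ n : ℕ, 0 ≤ 2 ^ n • x → 0 ≤ x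
  | 0, h => by simpa using h
  | n + 1, h => nonneg_of_two_pow_nsmul_nonneg_s8 n <|
      nsmul_two_semiclosed <| by rwa [smul_smul, ← pow_succ']

section SolidNorm

variable {E : Type v} [NormedAddCommGroup E] [Lattice E] [HasSolidNorm E] [IsOrderedAddMonoid E]
  [NormedSpace ℝ E]

/-- The positive cone is closed, so positivity passes from the dyadic approximations
`⌊a 2ⁿ⌋₊ / 2ⁿ` of `a` to `a` itself. -/
lemma real_smul_nonneg {a : ℝ} {x : E} (ha : 0 ≤ a) (hx : 0 ≤ x) : 0 ≤ a • x := by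
  have hcl : IsClosed {b : ℝ | 0 ≤ b • x} :=
    isClosed_le continuous_const (continuous_id.smul continuous_const)
  have hdyadic (n : ℕ) : (⌊a * 2 ^ n⌋₊ / 2 ^ n : ℝ) ∈ {b : ℝ | 0 ≤ b • x} := by
    refine nonneg_of_two_pow_nsmul_nonneg_s8 n ?_
    rw [← Nat.cast_smul_eq_nsmul ℝ, smul_smul, Nat.cast_pow, Nat.cast_ofNat,
      mul_div_cancel₀ _ (by positivity), Nat.cast_smul_eq_nsmul]
    exact nsmul_nonneg hx _
  exact hcl.mem_of_tendsto ((tendsto_nat_floor_mul_div_atTop ha).comp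
    (tendsto_pow_atTop_atTop_of_one_lt one_lt_two)) (Eventually.of_forall hdyadic)

instance HasSolidNorm.toPosSMulMono : PosSMulMono ℝ E :=
  PosSMulMono.of_smul_nonneg fun _ ha _ hx => real_smul_nonneg ha hx

lemma abs_smul_le_smul_abs_s8 {a : ℝ} (ha : 0 ≤ a) (x : E) : |a • x| ≤ a • |x| := by
  rw [abs_le', ← smul_neg]
  exact ⟨smul_le_smul_of_nonneg_left (le_abs_self x) ha,
    smul_le_smul_of_nonneg_left (neg_le_abs x) ha⟩

end SolidNorm

section Baire

variable {F : Type v} [NormedAddCommGroup F] [NormedSpace ℝ F] [CompleteSpace F]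

lemma exists_ball_subset_of_iUnion_closed_convex_symm (A : ℕ → Set F)
    (hcl : ∀ n, IsClosed (A n)) (hconv : ∀ n, Convex ℝ (A n))
    (hneg : ∀ n, ∀ x ∈ A n, -x ∈ A n) (hcover : ∀ x, ∃ n, x ∈ A n) :
    ∃ n, ∃ r > 0, Metric.ball (0 : F) r ⊆ A n := by
  obtain ⟨n, x, hx⟩ := nonempty_interior_of_iUnion_of_closed hcl
    (Set.iUnion_eq_univ_iff.2 hcover)
  have h0 : (0 : F) ∈ interior (A n) := by
    simpa using (hconv n).combo_interior_self_mem_interior hx (hneg n x (interior_subset hx))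
      (a := 1 / 2) (b := 1 / 2) (by norm_num) (by norm_num) (by norm_num)
  obtain ⟨r, hr, hball⟩ := Metric.mem_nhds_iff.1 (mem_interior_iff_mem_nhds.1 h0)
  exact ⟨n, r, hr, hball⟩

/-- `P x c` should be read as `x ∈ c • K` for a closed convex symmetric absorbing set `K`;
by Baire, such a `K` contains a ball around `0`. -/
lemma exists_forall_mul_norm_of_closed_convex (P : F → ℝ → Prop)
    (hcl : ∀ n : ℕ, IsClosed {x | P x n}) (hconv : ∀ n : ℕ, Convex ℝ {x | P x n})
    (hneg : ∀ (n : ℕ) x, P x n → P (-x) n)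
    (hsmul : ∀ {a : ℝ} {c : ℝ} {x : F}, 0 ≤ a → P x c → P (a • x) (a * c))
    (hcover : ∀ x, ∃ n : ℕ, P x n) :
    ∃ C, 0 ≤ C ∧ ∀ x, P x (C * ‖x‖) := by
  obtain ⟨n, r, hr, hball⟩ := exists_ball_subset_of_iUnion_closed_convex_symm
    (fun n => {x | P x n}) hcl hconv hneg hcover
  refine ⟨2 * n / r, by positivity, fun x => ?_⟩
  rcases eq_or_ne x 0 with rfl | hx
  · obtain ⟨m, hm⟩ := hcover 0
    simpa using hsmul le_rfl hm
  have hxn : 0 < ‖x‖ := norm_pos_iff.2 hx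
  have hy : P ((r / (2 * ‖x‖)) • x) n := hball <| by
    rw [mem_ball_zero_iff, norm_smul, Real.norm_of_nonneg (by positivity)]
    field_simp
    linarith
  convert hsmul (a := 2 * ‖x‖ / r) (by positivity) hy using 1
  · rw [smul_smul, div_mul_div_comm, mul_comm, div_self (by positivity), one_smul]
  · ring

end Baire

section Smoothing

variable {E : Type v} [NormedAddCommGroup E] [Lattice E] [HasSolidNorm E] [IsOrderedAddMonoid E]
  [NormedSpace ℝ E] [CompleteSpace E]

lemma exists_abs_apply_le_mul_norm_smul {u : E} (hu : 0 ≤ u) (A : E →L[ℝ] E)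
    (hA : ∀ f, InPrincipalIdeal u (A f)) :
    ∃ C, 0 ≤ C ∧ ∀ f, |A f| ≤ (C * ‖f‖) • u := by
  have hIcc (c : ℝ) : {f | |A f| ≤ c • u} = A ⁻¹' Set.Icc (-(c • u)) (c • u) := by
    ext f; simp only [Set.mem_ofPred_eq, Set.mem_preimage, Set.mem_Icc, abs_le', neg_le, and_comm]
  refine exists_forall_mul_norm_of_closed_convex (fun f c => |A f| ≤ c • u)
    (fun n => ?_) (fun n => ?_) (fun n f hf => ?_) (fun {a c f} ha hf => ?_) (fun f => ?_)
  · rw [hIcc]; exact isClosed_Icc.preimage A.continuous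
  · rw [hIcc]; exact (convex_Icc _ _).linear_preimage A.toLinearMap
  · simpa using hf
  · calc |A (a • f)| ≤ a • |A f| := by rw [map_smul]; exact abs_smul_le_smul_abs_s8 ha _
      _ ≤ a • c • u := smul_le_smul_of_nonneg_left hf ha
      _ = (a * c) • u := smul_smul a c u
  · obtain ⟨c, -, hc⟩ := hA f
    exact ⟨⌈c⌉₊, hc.trans (smul_le_smul_of_nonneg_right (Nat.le_ceil c) hu)⟩

end Smoothing

lemma exists_norm_apply_le_mul_apply_abs {E : Type*} [NormedAddCommGroup E] [Lattice E]
    [IsOrderedAddMonoid E] [NormedSpace ℝ E] {φ : E →L[ℝ] ℝ} (hφ : ∀ f, 0 ≤ f → 0 ≤ φ f)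
    (A : E →L[ℝ] E)
    (hA : ∀ ψ : E →L[ℝ] ℝ, ∃ c > (0 : ℝ), ∀ g f : E, |g| ≤ f → |ψ (A g)| ≤ c * φ f) :
    ∃ C, 0 ≤ C ∧ ∀ g, ‖A g‖ ≤ C * φ |g| := by
  have hball (c : ℝ) : {ψ : E →L[ℝ] ℝ | ∀ g, |ψ (A g)| ≤ c * φ |g|} =
      ⋂ g, ContinuousLinearMap.apply ℝ ℝ (A g) ⁻¹' Metric.closedBall 0 (c * φ |g|) := by
    ext ψ; simp
  obtain ⟨C, hC, hbound⟩ : ∃ C, 0 ≤ C ∧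
      ∀ (ψ : E →L[ℝ] ℝ) g, |ψ (A g)| ≤ C * ‖ψ‖ * φ |g| := by
    refine exists_forall_mul_norm_of_closed_convex
      (fun (ψ : E →L[ℝ] ℝ) c => ∀ g, |ψ (A g)| ≤ c * φ |g|)
      (fun n => ?_) (fun n => ?_) (fun n ψ hψ => ?_) (fun {a c ψ} ha hψ => ?_) (fun ψ => ?_)
    · rw [hball]
      exact isClosed_iInter fun g => Metric.isClosed_closedBall.preimage (map_continuous _)
    · rw [hball]
      exact convex_iInter fun g => (convex_closedBall _ _).linear_preimage
        (ContinuousLinearMap.apply ℝ ℝ (A g)).toLinearMap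
    · simpa using hψ
    · intro g
      rw [smul_apply, smul_eq_mul, abs_mul, abs_of_nonneg ha, mul_assoc]
      exact mul_le_mul_of_nonneg_left (hψ g) ha
    · obtain ⟨c, -, hc⟩ := hA ψ
      exact ⟨⌈c⌉₊, fun g => (hc g |g| le_rfl).trans
        (mul_le_mul_of_nonneg_right (Nat.le_ceil c) (hφ _ (abs_nonneg g)))⟩
  refine ⟨C, hC, fun g => NormedSpace.norm_le_dual_bound ℝ _
    (mul_nonneg hC (hφ _ (abs_nonneg g))) fun ψ => ?_⟩
  simpa [mul_right_comm] using hbound ψ g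

section Semigroup

variable {E : Type v} [NormedAddCommGroup E] [Lattice E] [HasSolidNorm E] [IsOrderedAddMonoid E]
  [NormedSpace ℝ E] {u : E} {φ : E →L[ℝ] ℝ}

lemma abs_apply_apply_apply_le (hu : 0 ≤ u) {A₁ A A₂ : E →L[ℝ] E} {C₁ C₂ : ℝ} (hC₁ : 0 ≤ C₁)
    (h₁ : ∀ f, |A₁ f| ≤ (C₁ * ‖f‖) • u) (h₂ : ∀ g, ‖A₂ g‖ ≤ C₂ * φ |g|) (f : E) :
    |A₁ (A (A₂ f))| ≤ (C₁ * ‖A‖ * C₂ * φ |f|) • u := by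
  refine (h₁ _).trans (smul_le_smul_of_nonneg_right ?_ hu)
  calc C₁ * ‖A (A₂ f)‖ ≤ C₁ * (‖A‖ * (C₂ * φ |f|)) :=
        mul_le_mul_of_nonneg_left ((A.le_opNorm _).trans
          (mul_le_mul_of_nonneg_left (h₂ f) (norm_nonneg A))) hC₁
    _ = C₁ * ‖A‖ * C₂ * φ |f| := by ring

lemma eventually_abs_apply_le_smul (hu : 0 ≤ u) (hφ : ∀ f, 0 ≤ f → 0 ≤ φ f)
    {T : ℝ → E →L[ℝ] E} (hsemi : ∀ s t, 0 ≤ s → 0 ≤ t → T (s + t) = (T s).comp (T t))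
    {t₁ t₂ C₁ C₂ : ℝ} (ht₁ : 0 ≤ t₁) (ht₂ : 0 ≤ t₂) (hC₁ : 0 ≤ C₁)
    (h₁ : ∀ f, |T t₁ f| ≤ (C₁ * ‖f‖) • u) (h₂ : ∀ g, ‖T t₂ g‖ ≤ C₂ * φ |g|)
    (hT : Tendsto (fun t => ‖T t‖) atTop (𝓝 0)) {ε : ℝ} (hε : 0 < ε) :
    ∀ᶠ t in atTop, ∀ f, |T t f| ≤ (ε * φ |f|) • u := by
  have hsmall : Tendsto (fun s => C₁ * ‖T s‖ * C₂) atTop (𝓝 0) := by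
    simpa using (hT.const_mul C₁).mul_const C₂
  obtain ⟨s₀, hs₀⟩ := eventually_atTop.1
    ((eventually_ge_atTop 0).and (hsmall.eventually (ge_mem_nhds hε)))
  filter_upwards [eventually_ge_atTop (t₁ + s₀ + t₂)] with t ht f
  obtain ⟨hs, hsε⟩ := hs₀ (t - t₁ - t₂) (by linarith)
  have hsplit : T t = (T t₁).comp ((T (t - t₁ - t₂)).comp (T t₂)) := by
    rw [← hsemi _ _ hs ht₂, ← hsemi _ _ ht₁ (by linarith)]
    congr 1
    ring
  rw [hsplit]
  exact (abs_apply_apply_apply_le hu hC₁ h₁ h₂ f).trans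
    (smul_le_smul_of_nonneg_right (mul_le_mul_of_nonneg_right hsε (hφ _ (abs_nonneg f))) hu)

end Semigroup

theorem stmt8_general {E : Type*} [NormedAddCommGroup E] [Lattice E] [HasSolidNorm E]
    [IsOrderedAddMonoid E] [NormedSpace ℝ E] [CompleteSpace E]
    (u : E) (hu : 0 ≤ u)
    (φ : E →L[ℝ] ℝ) (hφpos : ∀ f : E, 0 ≤ f → 0 ≤ φ f)
    (T S : ℝ → E →L[ℝ] E)
    (hTsemi : ∀ s t : ℝ, 0 ≤ s → 0 ≤ t → T (s + t) = (T s).comp (T t))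
    -- (a) smoothing: `e^{t₁ A} E ⊆ E_u` and `e^{t₂ A'} E' ⊆ (E')_φ`:
    (ha1 : ∃ t1 ≥ (0:ℝ), ∀ f : E, InPrincipalIdeal u (T t1 f))
    (ha2 : ∃ t2 ≥ (0:ℝ), ∀ ψ : E →L[ℝ] ℝ, ∃ c > (0:ℝ),
      ∀ g f : E, |g| ≤ f → |ψ (T t2 g)| ≤ c * φ f)
    -- (b) uniform eventual strong positivity of `(e^{tB})`: `e^{tB} ≥ c (u ⊗ φ)`:
    (hb : ∃ t3 ≥ (0:ℝ), ∃ c > (0:ℝ), ∀ t ≥ t3, ∀ f : E, 0 ≤ f → (c * φ f) • u ≤ S t f)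
    -- (c) `(e^{tA})` converges to `0` in operator norm:
    (hc : Tendsto (fun t => ‖T t‖) atTop (𝓝 0)) :
    ∃ τ ≥ (0:ℝ), ∃ c' > (0:ℝ), ∀ t ≥ τ, ∀ f : E,
      (c' * φ |f|) • u ≤ S t |f| - |T t f| ∧ |T t f| ≤ S t |f| := by
  obtain ⟨t₁, ht₁, h₁⟩ := ha1
  obtain ⟨t₂, ht₂, h₂⟩ := ha2
  obtain ⟨t₃, -, c, hc₀, hS⟩ := hb
  obtain ⟨C₁, hC₁, hC₁'⟩ := exists_abs_apply_le_mul_norm_smul hu _ h₁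
  obtain ⟨C₂, -, hC₂'⟩ := exists_norm_apply_le_mul_apply_abs hφpos _ h₂
  obtain ⟨τ, hτ⟩ := eventually_atTop.1 <|
    eventually_abs_apply_le_smul hu hφpos hTsemi ht₁ ht₂ hC₁ hC₁' hC₂' hc (half_pos hc₀)
  refine ⟨max τ (max t₃ 0), le_max_of_le_right (le_max_right _ _), c / 2, half_pos hc₀,
    fun t ht f => ?_⟩
  have hT := hτ t (le_of_max_le_left ht) f
  have hSt := hS t ((le_max_left _ _).trans (le_of_max_le_right ht)) |f| (abs_nonneg f)
  have hgap : (c / 2 * φ |f|) • u ≤ S t |f| - |T t f| :=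
    calc (c / 2 * φ |f|) • u = (c * φ |f|) • u - (c / 2 * φ |f|) • u := by
          rw [← sub_smul]; ring_nf
      _ ≤ S t |f| - |T t f| := sub_le_sub hSt hT
  have hgap_nonneg : 0 ≤ (c / 2 * φ |f|) • u :=
    smul_nonneg (mul_nonneg (half_pos hc₀).le (hφpos _ (abs_nonneg f))) hu
  exact ⟨hgap, sub_nonneg.1 (hgap_nonneg.trans hgap)⟩

/-- Theorem 3.5: uniform eventual domination of semigroups.  Here `T t = e^{tA}` and
`S t = e^{tB}` are (real) `C₀`-semigroups on a Banach lattice `E`, `u ≥ 0` is a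
quasi-interior point and `φ` a strictly positive functional.  Condition (a) for the dual
semigroup, `e^{t₂ A'} E' ⊆ (E')_φ`, is expressed by the modulus estimate
`|⟨ψ ∘ e^{t₂ A}, ·⟩| ≤ c_ψ φ` in the dual lattice. -/
theorem stmt8 {E : Type*} [NormedAddCommGroup E] [Lattice E] [HasSolidNorm E]
    [IsOrderedAddMonoid E] [NormedSpace ℝ E] [CompleteSpace E]
    (u : E) (hu : 0 ≤ u) (huq : Dense {x : E | InPrincipalIdeal u x})
    (φ : E →L[ℝ] ℝ) (hφpos : ∀ f : E, 0 ≤ f → 0 ≤ φ f)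
    (hφstrict : ∀ f : E, 0 ≤ f → f ≠ 0 → 0 < φ f)
    (T S : ℝ → E →L[ℝ] E)
    (hT0 : T 0 = 1) (hS0 : S 0 = 1)
    (hTsemi : ∀ s t : ℝ, 0 ≤ s → 0 ≤ t → T (s + t) = (T s).comp (T t))
    (hSsemi : ∀ s t : ℝ, 0 ≤ s → 0 ≤ t → S (s + t) = (S s).comp (S t))
    (hTcont : ∀ f : E, ContinuousOn (fun t => T t f) (Set.Ici 0))
    (hScont : ∀ f : E, ContinuousOn (fun t => S t f) (Set.Ici 0))
    -- (a) smoothing: `e^{t₁ A} E ⊆ E_u` and `e^{t₂ A'} E' ⊆ (E')_φ`: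
    (ha1 : ∃ t1 ≥ (0:ℝ), ∀ f : E, InPrincipalIdeal u (T t1 f))
    (ha2 : ∃ t2 ≥ (0:ℝ), ∀ ψ : E →L[ℝ] ℝ, ∃ c > (0:ℝ),
      ∀ g f : E, |g| ≤ f → |ψ (T t2 g)| ≤ c * φ f)
    -- (b) uniform eventual strong positivity of `(e^{tB})`: `e^{tB} ≥ c (u ⊗ φ)`:
    (hb : ∃ t3 ≥ (0:ℝ), ∃ c > (0:ℝ), ∀ t ≥ t3, ∀ f : E, 0 ≤ f → (c * φ f) • u ≤ S t f)
    -- (c) `(e^{tA})` converges to `0` in operator norm: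
    (hc : Tendsto (fun t => ‖T t‖) atTop (𝓝 0)) :
    ∃ τ ≥ (0:ℝ), ∃ c' > (0:ℝ), ∀ t ≥ τ, ∀ f : E,
      (c' * φ |f|) • u ≤ S t |f| - |T t f| ∧ |T t f| ≤ S t |f| :=
  stmt8_general u hu φ hφpos T S hTsemi ha1 ha2 hb hc
end

section
/- On $E = C[0,1]$, define $\phi_A(f) = \int_0^1 f(x)\,dx$, $\phi_B(f) = 2\int_0^1 x f(x)\,dx$, $P_A = \mathbf{1} \otimes \phi_A$, $P_B = \mathbf{1} \otimes \phi_B$, and bounded operators $A = P_A - \tfrac{3}{2}\,\mathrm{id}$, $B = P_B - \mathrm{id}$. For $n \in \mathbb{N}$ let $f_n(x) = \max(1 - nx, 0)$. Then for each fixed $t > 0$ and all $n > \tfrac{2}{3} e^{t/2}$, the function $(e^{tB} - e^{tA}) f_n$ is not positive; specifically, $(e^{tB} - e^{tA}) f_n(1) = \left(\tfrac{1}{3n^2} - \tfrac{e^{-t/2}}{2n}\right)(1 - e^{-t}) < 0$. -/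
/-! Both `P_A` and `P_B` are rank-one idempotents, because `φ_A 1 = φ_B 1 = 1`. Summing the
exponential series of an idempotent `P` gives `exp (t • (P - α • 1)) = e^{-αt} ((1 - P) + e^t P)`.
Since `f_n` vanishes at `1` and `P f` is the constant `φ f`, the value of `e^{t(P - α)} f_n` at `1`
is `e^{-αt} (e^t - 1) φ(f_n)`. As `f_n` is supported on `[0, 1/n]`, `φ_A f_n = 1/(2n)` and
`φ_B f_n = 1/(3n²)`, and the difference of the two values factors as stated; its first factor is
negative exactly when `n > (2/3) e^{t/2}`. -/

open Filter Topology intervalIntegral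

noncomputable section

/-- The unit interval `[0,1]` as a subtype of `ℝ`. -/
abbrev I01 : Set ℝ := Set.Icc (0:ℝ) 1

/-- Projection of `ℝ` onto `[0,1]`. -/
noncomputable def pj : ℝ → I01 := Set.projIcc 0 1 zero_le_one

lemma pj_continuous : Continuous pj := continuous_projIcc

/-- The functional `φ_A(f) = ∫₀¹ f(x) dx` on `C[0,1]`. -/
noncomputable def phiA : C(I01, ℝ) →L[ℝ] ℝ :=
  LinearMap.mkContinuous
    { toFun := fun f => ∫ x in (0:ℝ)..1, f (pj x)
      map_add' := by
        intro f g
        show (∫ x in (0:ℝ)..1, (f + g) (pj x))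
            = (∫ x in (0:ℝ)..1, f (pj x)) + ∫ x in (0:ℝ)..1, g (pj x)
        simp_rw [ContinuousMap.add_apply]
        exact intervalIntegral.integral_add
          ((f.continuous.comp pj_continuous : Continuous fun x : ℝ => f (pj x)).intervalIntegrable 0 1)
          ((g.continuous.comp pj_continuous : Continuous fun x : ℝ => g (pj x)).intervalIntegrable 0 1)
      map_smul' := by
        intro c f
        show (∫ x in (0:ℝ)..1, (c • f) (pj x)) = c • ∫ x in (0:ℝ)..1, f (pj x)
        simp_rw [ContinuousMap.smul_apply]
        exact intervalIntegral.integral_smul c (fun x => f (pj x)) }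
    1
    (by
      intro f
      simp only [LinearMap.coe_mk, AddHom.coe_mk, one_mul]
      calc ‖∫ x in (0:ℝ)..1, f (pj x)‖
          ≤ ‖f‖ * |(1:ℝ) - 0| := by
            apply intervalIntegral.norm_integral_le_of_norm_le_const
            intro x _
            exact f.norm_coe_le_norm _
        _ = ‖f‖ := by simp)

/-- The functional `φ_B(f) = 2 ∫₀¹ x f(x) dx` on `C[0,1]`. -/
noncomputable def phiB : C(I01, ℝ) →L[ℝ] ℝ :=
  LinearMap.mkContinuous
    { toFun := fun f => 2 * ∫ x in (0:ℝ)..1, x * f (pj x)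
      map_add' := by
        intro f g
        show 2 * (∫ x in (0:ℝ)..1, x * (f + g) (pj x))
            = 2 * (∫ x in (0:ℝ)..1, x * f (pj x)) + 2 * ∫ x in (0:ℝ)..1, x * g (pj x)
        simp_rw [ContinuousMap.add_apply, mul_add]
        have hf : IntervalIntegrable (fun x : ℝ => x * f (pj x)) MeasureTheory.volume 0 1 :=
          (continuous_id.mul (f.continuous.comp pj_continuous)).intervalIntegrable 0 1
        have hg : IntervalIntegrable (fun x : ℝ => x * g (pj x)) MeasureTheory.volume 0 1 :=
          (continuous_id.mul (g.continuous.comp pj_continuous)).intervalIntegrable 0 1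
        rw [intervalIntegral.integral_add hf hg]
        ring
      map_smul' := by
        intro c f
        show 2 * (∫ x in (0:ℝ)..1, x * (c • f) (pj x)) = c • (2 * ∫ x in (0:ℝ)..1, x * f (pj x))
        have h : (fun x : ℝ => x * (c • f) (pj x)) = fun x : ℝ => c * (x * f (pj x)) := by
          funext x
          simp only [ContinuousMap.smul_apply, smul_eq_mul]
          ring
        rw [h, intervalIntegral.integral_const_mul]
        simp only [smul_eq_mul]
        ring }
    2
    (by
      intro f
      simp only [LinearMap.coe_mk, AddHom.coe_mk, norm_mul, Real.norm_ofNat]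
      have h : ‖∫ x in (0:ℝ)..1, x * f (pj x)‖ ≤ ‖f‖ * |(1:ℝ) - 0| := by
        apply intervalIntegral.norm_integral_le_of_norm_le_const
        intro x hx
        rw [Set.uIoc_of_le (by norm_num : (0:ℝ) ≤ 1)] at hx
        have hx0 : |x| ≤ 1 := by
          rw [abs_le]
          constructor <;> [linarith [hx.1]; linarith [hx.2]]
        calc ‖x * f (pj x)‖ = |x| * ‖f (pj x)‖ := by simp [abs_mul]
          _ ≤ 1 * ‖f‖ :=
              mul_le_mul hx0 (f.norm_coe_le_norm _) (norm_nonneg _) zero_le_one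
          _ = ‖f‖ := one_mul _
      rw [abs_of_nonneg (by norm_num : (0:ℝ) ≤ 1 - 0)] at h
      nlinarith [norm_nonneg f])

/-- The rank-one projection `P_A = 𝟏 ⊗ φ_A`. -/
noncomputable def PA : C(I01, ℝ) →L[ℝ] C(I01, ℝ) := phiA.smulRight 1

/-- The rank-one projection `P_B = 𝟏 ⊗ φ_B`. -/
noncomputable def PB : C(I01, ℝ) →L[ℝ] C(I01, ℝ) := phiB.smulRight 1

/-- The operator `A = P_A - (3/2) id`. -/
noncomputable def opA : C(I01, ℝ) →L[ℝ] C(I01, ℝ) := PA - (3/2 : ℝ) • 1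

/-- The operator `B = P_B - id`. -/
noncomputable def opB : C(I01, ℝ) →L[ℝ] C(I01, ℝ) := PB - 1

/-- The exponential `e^M` of a bounded operator `M` on `C[0,1]`, via the entire
functional calculus `NormedSpace.exp` in the Banach algebra of bounded operators
(with its norm topology). -/
noncomputable def expOp (M : C(I01, ℝ) →L[ℝ] C(I01, ℝ)) : C(I01, ℝ) →L[ℝ] C(I01, ℝ) :=
  letI : TopologicalSpace (C(I01,ℝ) →L[ℝ] C(I01,ℝ)) := UniformSpace.toTopologicalSpace
  letI : IsTopologicalRing (C(I01,ℝ) →L[ℝ] C(I01,ℝ)) := by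
    exact @NonUnitalSeminormedRing.toIsTopologicalRing (C(I01,ℝ) →L[ℝ] C(I01,ℝ)) inferInstance
  NormedSpace.exp M

/-- The hat function `f_n(x) = max(1 - nx, 0)`. -/
noncomputable def hatFn (n : ℕ) : C(I01, ℝ) :=
  ⟨fun x => max (1 - n * (x : ℝ)) 0,
    (continuous_const.sub (continuous_const.mul continuous_subtype_val)).max continuous_const⟩

open NormedSpace

section IdempotentExp

open Nat

variable {𝔸 : Type*} [NormedRing 𝔸] [NormedAlgebra ℝ 𝔸] [CompleteSpace 𝔸]

theorem IsIdempotentElem.exp_smul {Q : 𝔸} (hQ : IsIdempotentElem Q) (t : ℝ) :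
    exp (t • Q) = (1 - Q) + Real.exp t • Q := by
  have hterm : ∀ n : ℕ, ((n ! : ℝ)⁻¹ • (t • Q) ^ n)
      = ((n ! : ℝ)⁻¹ • t ^ n) • Q + (Pi.single 0 (1 - Q) : ℕ → 𝔸) n := by
    rintro (_ | n)
    · simp
    · rw [smul_pow, hQ.pow_succ_eq, smul_smul, Pi.single_eq_of_ne n.succ_ne_zero, add_zero,
        smul_eq_mul]
  have hsum := ((exp_series_hasSum_exp' (𝕂 := ℝ) t).smul_const Q).add (hasSum_pi_single 0 (1 - Q))
  rw [← Real.exp_eq_exp_ℝ, ← funext hterm] at hsum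
  rw [(exp_series_hasSum_exp' (𝕂 := ℝ) (t • Q)).unique hsum, add_comm]

theorem IsIdempotentElem.exp_smul_sub_smul_one {Q : 𝔸} (hQ : IsIdempotentElem Q) (α t : ℝ) :
    exp (t • (Q - α • 1)) = Real.exp (-(α * t)) • ((1 - Q) + Real.exp t • Q) := by
  have hsplit : t • (Q - α • (1 : 𝔸)) = algebraMap ℝ 𝔸 (-(α * t)) + t • Q := by
    rw [Algebra.algebraMap_eq_smul_one, smul_sub, smul_smul, neg_smul, mul_comm]; abel
  have hball (x : 𝔸) : x ∈ Metric.eball 0 (expSeries ℝ 𝔸).radius :=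
    (expSeries_radius_eq_top ℝ 𝔸).symm ▸ edist_lt_top _ _
  rw [hsplit, exp_add_of_commute_of_mem_ball (Algebra.commutes _ _) (hball _) (hball _),
    ← algebraMap_exp_comm, ← Algebra.smul_def, hQ.exp_smul, Real.exp_eq_exp_ℝ]

end IdempotentExp

theorem ContinuousLinearMap.isIdempotentElem_smulRight {R M : Type*} [CommSemiring R]
    [TopologicalSpace R] [AddCommMonoid M] [TopologicalSpace M] [Module R M] [ContinuousSMul R M]
    {φ : M →L[R] R} {u : M} (h : φ u = 1) :
    IsIdempotentElem (φ.smulRight u) := by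
  ext f
  simp [h]

theorem expOp_smul_smulRight_one_sub_apply {φ : C(I01, ℝ) →L[ℝ] ℝ} (hφ : φ 1 = 1) (α t : ℝ)
    (f : C(I01, ℝ)) (x : I01) :
    expOp (t • (φ.smulRight 1 - α • 1)) f x
      = Real.exp (-(α * t)) * (f x + (Real.exp t - 1) * φ f) := by
  have hexp : expOp (t • (φ.smulRight 1 - α • 1))
      = Real.exp (-(α * t)) • ((1 - φ.smulRight 1) + Real.exp t • φ.smulRight 1) :=
    IsIdempotentElem.exp_smul_sub_smul_one (𝔸 := C(I01, ℝ) →L[ℝ] C(I01, ℝ))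
      (ContinuousLinearMap.isIdempotentElem_smulRight hφ) α t
  rw [hexp]
  simp only [smul_add, add_apply, smul_apply, sub_apply, one_apply_eq_self,
    ContinuousLinearMap.smulRight_apply, ContinuousMap.add_apply, ContinuousMap.coe_smul,
    ContinuousMap.coe_sub, ContinuousMap.coe_one, Pi.smul_apply, Pi.sub_apply, Pi.one_apply,
    smul_eq_mul, mul_one]
  ring

theorem phiA_one : phiA 1 = 1 := by
  change ∫ x in (0:ℝ)..1, (1 : C(I01, ℝ)) (pj x) = 1
  simp

theorem phiB_one : phiB 1 = 1 := by
  change 2 * ∫ x in (0:ℝ)..1, x * (1 : C(I01, ℝ)) (pj x) = 1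
  norm_num

theorem hatFn_pj_of_mem (n : ℕ) {x : ℝ} (hx : x ∈ I01) : hatFn n (pj x) = max (1 - n * x) 0 := by
  simp [hatFn, pj, Set.projIcc_of_mem _ hx]

theorem hatFn_apply_one {n : ℕ} (hn : n ≠ 0) :
    hatFn n ⟨1, Set.right_mem_Icc.mpr zero_le_one⟩ = 0 := by
  have : (1 : ℝ) ≤ n := by exact_mod_cast Nat.one_le_iff_ne_zero.mpr hn
  simpa [hatFn] using this

theorem integral_mul_hatFn_pj {g : ℝ → ℝ} (hg : Continuous g) {n : ℕ} (hn : n ≠ 0) :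
    ∫ x in (0:ℝ)..1, g x * hatFn n (pj x) = ∫ x in (0:ℝ)..(n:ℝ)⁻¹, g x * (1 - n * x) := by
  have hn0 : (0 : ℝ) < n := by positivity
  have ha0 : (0 : ℝ) ≤ (n : ℝ)⁻¹ := by positivity
  have ha1 : (n : ℝ)⁻¹ ≤ 1 :=
    inv_le_one_of_one_le₀ (by exact_mod_cast Nat.one_le_iff_ne_zero.mpr hn)
  have hint (a b : ℝ) :
      IntervalIntegrable (fun x => g x * hatFn n (pj x)) MeasureTheory.volume a b :=
    (hg.mul ((hatFn n).continuous.comp pj_continuous)).intervalIntegrable a b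
  have hvanish : ∫ x in (n:ℝ)⁻¹..1, g x * hatFn n (pj x) = 0 := by
    refine (integral_congr fun x hx => ?_).trans integral_zero
    rw [Set.uIcc_of_le ha1] at hx
    have : 1 ≤ n * x := by simpa [hn0.ne'] using mul_le_mul_of_nonneg_left hx.1 hn0.le
    rw [hatFn_pj_of_mem n ⟨ha0.trans hx.1, hx.2⟩, max_eq_right (by linarith), mul_zero]
  rw [← integral_add_adjacent_intervals (hint 0 (n : ℝ)⁻¹) (hint _ 1), hvanish, add_zero]
  refine integral_congr fun x hx => ?_
  rw [Set.uIcc_of_le ha0] at hx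
  have : n * x ≤ 1 := by simpa [hn0.ne'] using mul_le_mul_of_nonneg_left hx.2 hn0.le
  rw [hatFn_pj_of_mem n ⟨hx.1, hx.2.trans ha1⟩, max_eq_left (by linarith)]

theorem phiA_hatFn {n : ℕ} (hn : n ≠ 0) : phiA (hatFn n) = 1 / (2 * n) := by
  have h := integral_mul_hatFn_pj (g := fun _ => 1) continuous_const hn
  simp only [one_mul] at h
  change ∫ x in (0:ℝ)..1, hatFn n (pj x) = _
  rw [h, integral_sub intervalIntegrable_const ((continuous_const_mul _).intervalIntegrable _ _),
    integral_const_mul, integral_const, integral_id]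
  simp only [smul_eq_mul, sub_zero, mul_one, inv_pow]
  field_simp
  ring

theorem phiB_hatFn {n : ℕ} (hn : n ≠ 0) : phiB (hatFn n) = 1 / (3 * n ^ 2) := by
  change 2 * ∫ x in (0:ℝ)..1, x * hatFn n (pj x) = _
  rw [integral_mul_hatFn_pj (g := fun x => x) continuous_id hn]
  have hpoly (x : ℝ) : x * (1 - n * x) = x - n * x ^ 2 := by ring
  simp_rw [hpoly]
  rw [integral_sub intervalIntegrable_id
      ((by fun_prop : Continuous fun x : ℝ => (n : ℝ) * x ^ 2).intervalIntegrable _ _),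
    integral_const_mul, integral_pow, integral_id]
  simp only [inv_pow]
  field_simp
  ring

theorem expOp_sub_apply_hatFn_one {n : ℕ} (hn : n ≠ 0) (t : ℝ) :
    ((expOp (t • opB) - expOp (t • opA)) (hatFn n)) ⟨1, Set.right_mem_Icc.mpr zero_le_one⟩
      = (1/(3*(n:ℝ)^2) - Real.exp (-t/2)/(2*(n:ℝ))) * (1 - Real.exp (-t)) := by
  have hB : opB = phiB.smulRight 1 - (1 : ℝ) • 1 := by rw [one_smul]; rfl
  rw [sub_apply, ContinuousMap.sub_apply, hB, opA, PA,
    expOp_smul_smulRight_one_sub_apply phiB_one, expOp_smul_smulRight_one_sub_apply phiA_one,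
    hatFn_apply_one hn, phiA_hatFn hn, phiB_hatFn hn]
  have h1 : Real.exp (-t) * Real.exp t = 1 := by rw [← Real.exp_add]; simp
  have h2 : Real.exp (-(3/2 * t)) = Real.exp (-t/2) * Real.exp (-t) := by
    rw [← Real.exp_add]; ring_nf
  rw [one_mul, h2]
  linear_combination (1/(3*(n:ℝ)^2) - Real.exp (-t/2)/(2*(n:ℝ))) * h1

/-- The example showing that individual eventual domination does not imply uniform
eventual domination: for each fixed `t > 0` and all `n > (2/3) e^{t/2}`, the function
`(e^{tB} - e^{tA}) f_n` takes the strictly negative value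
`(1/(3n²) - e^{-t/2}/(2n))(1 - e^{-t})` at the point `1`; in particular it is not
positive. -/
theorem stmt9 (t : ℝ) (ht : 0 < t) (n : ℕ) (hn : (2/3 : ℝ) * Real.exp (t/2) < n) :
    ((expOp (t • opB) - expOp (t • opA)) (hatFn n))
        ⟨1, Set.right_mem_Icc.mpr zero_le_one⟩
      = (1/(3*(n:ℝ)^2) - Real.exp (-t/2)/(2*(n:ℝ))) * (1 - Real.exp (-t)) ∧
    ((expOp (t • opB) - expOp (t • opA)) (hatFn n))
        ⟨1, Set.right_mem_Icc.mpr zero_le_one⟩ < 0 ∧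
    ¬ (0 ≤ (expOp (t • opB) - expOp (t • opA)) (hatFn n)) := by
  have hn_pos : (0 : ℝ) < n := lt_trans (by positivity) hn
  have hval := expOp_sub_apply_hatFn_one (n := n) (by exact_mod_cast hn_pos.ne') t
  have hcoeff : 1/(3*(n:ℝ)^2) - Real.exp (-t/2)/(2*(n:ℝ)) < 0 := by
    have hinv : Real.exp (-t/2) * Real.exp (t/2) = 1 := by
      rw [← Real.exp_add, neg_div, neg_add_cancel, Real.exp_zero]
    rw [sub_neg, div_lt_div_iff₀ (by positivity) (by positivity)]
    nlinarith [mul_lt_mul_of_pos_left hn (Real.exp_pos (-t/2))]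
  have hneg : ((expOp (t • opB) - expOp (t • opA)) (hatFn n))
      ⟨1, Set.right_mem_Icc.mpr zero_le_one⟩ < 0 := by
    rw [hval]
    exact mul_neg_of_neg_of_pos hcoeff (sub_pos.mpr (Real.exp_lt_one_iff.mpr (neg_neg_of_pos ht)))
  exact ⟨hval, hneg, fun hpos => (hpos _).not_gt hneg⟩

end
end

section
/- Let $u_1(x) = \cos(\tfrac{\pi}{2}x)$ and $u_2(x) = \sin(\tfrac{\pi}{2}x)$ on $(-1,1)$, and let $P = c(u_1 \otimes u_1 + u_2 \otimes u_2)$ (with normalisation constant $c = 1$, since $\|u_1\|_{L^2}^2 = \|u_2\|_{L^2}^2 = 1$) be the orthogonal projection in $L^2(-1,1)$ onto $\mathrm{span}\{u_1, u_2\}$. Then $P$ is not a positive operator: for the indicator function $f = \mathbf{1}_{(0,1)}$, the function $Pf$ takes strictly negative values at points $x$ sufficiently close to $-1$. -/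
open Real Set

/-
Both coefficients `⟨uᵢ, 𝟙_{(0,1)}⟩ = ∫₀¹ uᵢ` equal `2/π`, so
`Pf(x) = (2/π)(cos t + sin t) = (2√2/π) sin(t + π/4)` with `t = πx/2`, which is negative as soon as
`t + π/4 ∈ (-π, 0)`, in particular for `x ∈ (-1, -1/2)`.
-/

theorem integral_cos_pi_div_two_mul_sq : ∫ x in (-1 : ℝ)..1, cos (π / 2 * x) ^ 2 = 1 := by
  rw [intervalIntegral.integral_comp_mul_left (fun y => cos y ^ 2) pi_div_two_pos.ne',
    integral_cos_sq, mul_neg_one, mul_one]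
  simp [cos_pi_div_two]

theorem integral_sin_pi_div_two_mul_sq : ∫ x in (-1 : ℝ)..1, sin (π / 2 * x) ^ 2 = 1 := by
  rw [intervalIntegral.integral_comp_mul_left (fun y => sin y ^ 2) pi_div_two_pos.ne',
    integral_sin_sq, mul_neg_one, mul_one]
  simp [cos_pi_div_two]

theorem integral_cos_pi_div_two_mul : ∫ y in (0 : ℝ)..1, cos (π / 2 * y) = 2 / π := by
  rw [intervalIntegral.integral_comp_mul_left cos pi_div_two_pos.ne', integral_cos]
  simp

theorem integral_sin_pi_div_two_mul : ∫ y in (0 : ℝ)..1, sin (π / 2 * y) = 2 / π := by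
  rw [intervalIntegral.integral_comp_mul_left sin pi_div_two_pos.ne', integral_sin]
  simp [cos_pi_div_two]

theorem cos_add_sin_neg {t : ℝ} (h₁ : -(5 * π / 4) < t) (h₂ : t < -(π / 4)) :
    cos t + sin t < 0 := by
  have hsin : sin (t + π / 4) < 0 := sin_neg_of_neg_of_neg_pi_lt (by linarith) (by linarith)
  have hsum : sin (t + π / 4) = √2 / 2 * (cos t + sin t) := by
    rw [sin_add, cos_pi_div_four, sin_pi_div_four]
    ring
  rw [hsum] at hsin
  exact neg_of_mul_neg_right hsin (by positivity)

theorem projection_indicator_neg {x : ℝ} (h₁ : -(5 / 2) < x) (h₂ : x < -(1 / 2)) :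
    (∫ y in (0 : ℝ)..1, cos (π / 2 * y)) * cos (π / 2 * x)
      + (∫ y in (0 : ℝ)..1, sin (π / 2 * y)) * sin (π / 2 * x) < 0 := by
  rw [integral_cos_pi_div_two_mul, integral_sin_pi_div_two_mul, ← mul_add]
  refine mul_neg_of_pos_of_neg (by positivity) (cos_add_sin_neg ?_ ?_)
  · nlinarith [pi_pos]
  · nlinarith [pi_pos]

/-- The orthogonal projection `P = u₁ ⊗ u₁ + u₂ ⊗ u₂` in `L²(-1,1)` onto the span of
`u₁(x) = cos(πx/2)` and `u₂(x) = sin(πx/2)` (which are normalised in `L²(-1,1)`) is not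
positive: for `f = 𝟙_{(0,1)}`, the function
`Pf(x) = ⟨u₁, f⟩ u₁(x) + ⟨u₂, f⟩ u₂(x)` is strictly negative for `x` close to `-1`. -/
theorem stmt12 :
    -- normalisation: ‖u₁‖₂² = ‖u₂‖₂² = 1
    (∫ x in (-1:ℝ)..1, Real.cos (π/2 * x)^2) = 1 ∧
    (∫ x in (-1:ℝ)..1, Real.sin (π/2 * x)^2) = 1 ∧
    -- Pf takes strictly negative values near -1 (f = 𝟙_{(0,1)}, so ⟨uᵢ, f⟩ = ∫₀¹ uᵢ)
    (∃ δ > (0:ℝ), ∀ x ∈ Ioo (-1:ℝ) (-1 + δ),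
      (∫ y in (0:ℝ)..1, Real.cos (π/2 * y)) * Real.cos (π/2 * x)
        + (∫ y in (0:ℝ)..1, Real.sin (π/2 * y)) * Real.sin (π/2 * x) < 0) ∧
    -- hence Pf is not a positive function on (-1,1)
    ¬ (∀ x ∈ Ioo (-1:ℝ) 1,
      0 ≤ (∫ y in (0:ℝ)..1, Real.cos (π/2 * y)) * Real.cos (π/2 * x)
        + (∫ y in (0:ℝ)..1, Real.sin (π/2 * y)) * Real.sin (π/2 * x)) := by
  refine ⟨integral_cos_pi_div_two_mul_sq, integral_sin_pi_div_two_mul_sq,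
    ⟨1 / 2, by norm_num, fun x hx =>
      projection_indicator_neg (by linarith [hx.1]) (by linarith [hx.2])⟩, fun hpos => ?_⟩
  have hneg := projection_indicator_neg (x := -3 / 4) (by norm_num) (by norm_num)
  exact hneg.not_ge (hpos (-3 / 4) (by norm_num))
end
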